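/- arXiv:2101.08712 — 2 statements merged into one kernel-verified Lean document; each statement's English description precedes it below -/
import Mathlib

section
/- Let n ≥ 1 and let p_0, p_1, …, p_n ∈ ℝ² be the vertices of a closed polygonal chain with p_n = p_0, with signed (shoelace) area A, and let R(x, y) = (y, −x). Then for every affine map v : ℝ² → ℝ² with linear part B (i.e. v(x) = v_0 + B x), one has ∑_{i=0}^{n−1} v((p_i + p_{i+1})/2) ⊗ R(p_{i+1} − p_i) = A · B. In particular, if A ≠ 0, the discrete gradient reconstruction (1/A) ∑_{i=0}^{n−1} v(edge midpoint) ⊗ R(edge vector) recovers exactly the gradient B of any affine displacement field on the polygonal cell. -/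
open scoped BigOperators Matrix

noncomputable section

/-- Outer product `u ⊗ w` of two vectors of `ℝ²`. -/
def outer2 (u w : Fin 2 → ℝ) : Matrix (Fin 2) (Fin 2) ℝ := fun i j => u i * w j

/-- The linear rotation `R(x, y) = (y, −x)`. -/
def rot2 (w : Fin 2 → ℝ) : Fin 2 → ℝ := ![w 1, -(w 0)]

/-!
Write `m = (a + b) / 2` and `e = b - a` for an edge from `a` to `b`. Expanding the bilinear
product gives `m ⊗ R e = ½ (b ⊗ R b - a ⊗ R a) + ½ (a₀ b₁ - b₀ a₁) • 1`, because
`a ⊗ R b - b ⊗ R a` is the cross product of `a` and `b` times the identity. Summed around the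
closed chain the first part telescopes away and the second is `A • 1`. For `v x = v₀ + B x`,
the constant part contributes `v₀ ⊗ R (∑ e) = 0`, and the linear part is `B` times the sum
above.
-/

open Matrix

def shoelaceArea (p : ℕ → Fin 2 → ℝ) (n : ℕ) : ℝ :=
  (1 / 2 : ℝ) * ∑ i ∈ Finset.range n, (p i 0 * p (i + 1) 1 - p (i + 1) 0 * p i 1)

lemma outer2_eq_vecMulVec (u w : Fin 2 → ℝ) : outer2 u w = vecMulVec u w := rfl

lemma rot2_sub (a b : Fin 2 → ℝ) : rot2 (a - b) = rot2 a - rot2 b := by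
  ext i
  fin_cases i <;> simp [rot2, sub_eq_add_neg, add_comm]

lemma Finset.sum_range_sub_comp_eq_zero {α M : Type*} [AddCommGroup M] {n : ℕ} {p : ℕ → α}
    (hp : p n = p 0) (f : α → M) :
    ∑ i ∈ Finset.range n, (f (p (i + 1)) - f (p i)) = 0 := by
  rw [Finset.sum_range_sub (fun i => f (p i)), hp, sub_self]

lemma vecMulVec_midpoint_rot2_sub (a b : Fin 2 → ℝ) :
    vecMulVec ((1 / 2 : ℝ) • (a + b)) (rot2 (b - a)) =
      (1 / 2 : ℝ) • (vecMulVec b (rot2 b) - vecMulVec a (rot2 a)) +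
        ((1 / 2 : ℝ) * (a 0 * b 1 - b 0 * a 1)) • (1 : Matrix (Fin 2) (Fin 2) ℝ) := by
  ext i j
  fin_cases i <;> fin_cases j <;> simp [vecMulVec_apply, rot2] <;> ring

lemma sum_vecMulVec_rot2_edge_eq_zero {n : ℕ} {p : ℕ → Fin 2 → ℝ} (hp : p n = p 0)
    (w : Fin 2 → ℝ) :
    ∑ i ∈ Finset.range n, vecMulVec w (rot2 (p (i + 1) - p i)) = 0 := by
  simp_rw [rot2_sub, vecMulVec_sub]
  exact Finset.sum_range_sub_comp_eq_zero hp (fun x => vecMulVec w (rot2 x))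

lemma sum_vecMulVec_midpoint_rot2_edge {n : ℕ} {p : ℕ → Fin 2 → ℝ} (hp : p n = p 0) :
    ∑ i ∈ Finset.range n,
        vecMulVec ((1 / 2 : ℝ) • (p i + p (i + 1))) (rot2 (p (i + 1) - p i)) =
      shoelaceArea p n • (1 : Matrix (Fin 2) (Fin 2) ℝ) := by
  simp_rw [vecMulVec_midpoint_rot2_sub, Finset.sum_add_distrib, ← Finset.smul_sum,
    Finset.sum_range_sub_comp_eq_zero hp (fun x => vecMulVec x (rot2 x)), smul_zero, zero_add,
    ← Finset.sum_smul, ← Finset.mul_sum, shoelaceArea]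

theorem polygon_gradient_reconstruction_exact_on_affine_general (n : ℕ)
    (p : ℕ → Fin 2 → ℝ) (hp : p n = p 0) (A : ℝ)
    (hA : A = (1 / 2 : ℝ) * ∑ i ∈ Finset.range n,
      (p i 0 * p (i + 1) 1 - p (i + 1) 0 * p i 1))
    (v : (Fin 2 → ℝ) → (Fin 2 → ℝ)) (v0 : Fin 2 → ℝ) (B : Matrix (Fin 2) (Fin 2) ℝ)
    (hv : ∀ x, v x = v0 + B.mulVec x) :
    (∑ i ∈ Finset.range n,
        outer2 (v ((1 / 2 : ℝ) • (p i + p (i + 1)))) (rot2 (p (i + 1) - p i))) = A • B ∧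
    (A ≠ 0 →
      (1 / A) • (∑ i ∈ Finset.range n,
          outer2 (v ((1 / 2 : ℝ) • (p i + p (i + 1)))) (rot2 (p (i + 1) - p i))) = B) := by
  have hsum : ∑ i ∈ Finset.range n,
      outer2 (v ((1 / 2 : ℝ) • (p i + p (i + 1)))) (rot2 (p (i + 1) - p i)) = A • B := by
    simp_rw [hv, outer2_eq_vecMulVec, add_vecMulVec, ← mul_vecMulVec, Finset.sum_add_distrib,
      ← Finset.mul_sum]
    rw [sum_vecMulVec_rot2_edge_eq_zero hp, sum_vecMulVec_midpoint_rot2_edge hp,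
      zero_add, Matrix.mul_smul, mul_one, shoelaceArea, ← hA]
  refine ⟨hsum, fun hA0 => ?_⟩
  rw [hsum, smul_smul, one_div_mul_cancel hA0, one_smul]

theorem polygon_gradient_reconstruction_exact_on_affine (n : ℕ) (hn : 1 ≤ n)
    (p : ℕ → Fin 2 → ℝ) (hp : p n = p 0) (A : ℝ)
    (hA : A = (1 / 2 : ℝ) * ∑ i ∈ Finset.range n,
      (p i 0 * p (i + 1) 1 - p (i + 1) 0 * p i 1))
    (v : (Fin 2 → ℝ) → (Fin 2 → ℝ)) (v0 : Fin 2 → ℝ) (B : Matrix (Fin 2) (Fin 2) ℝ)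
    (hv : ∀ x, v x = v0 + B.mulVec x) :
    (∑ i ∈ Finset.range n,
        outer2 (v ((1 / 2 : ℝ) • (p i + p (i + 1)))) (rot2 (p (i + 1) - p i))) = A • B ∧
    (A ≠ 0 →
      (1 / A) • (∑ i ∈ Finset.range n,
          outer2 (v ((1 / 2 : ℝ) • (p i + p (i + 1)))) (rot2 (p (i + 1) - p i))) = B) :=
  polygon_gradient_reconstruction_exact_on_affine_general n p hp A hA v v0 B hv
end
end

section
/- Let p_0, p_1, p_2, p_3 ∈ ℝ³, let S_0 = (1/2)(p_2 − p_1) × (p_3 − p_1), S_1 = (1/2)(p_3 − p_0) × (p_2 − p_0), S_2 = (1/2)(p_1 − p_0) × (p_3 − p_0), S_3 = (1/2)(p_2 − p_0) × (p_1 − p_0), and let b_i denote the barycenter of the face opposite p_i (e.g. b_0 = (p_1 + p_2 + p_3)/3). Then ∑_{i=0}^{3} b_i ⊗ S_i = V · I₃, where V = (1/6) ⟨p_1 − p_0, (p_2 − p_0) × (p_3 − p_0)⟩ is the signed volume of the tetrahedron and I₃ is the 3×3 identity matrix. -/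
/-!
Translating every barycenter by the same vector does not change `∑ bᵢ ⊗ Sᵢ`, because the
vector areas of the faces of a closed surface sum to zero. Subtracting `b₀` leaves
`bᵢ - b₀ = -(pᵢ - p₀)/3` for `i = 1, 2, 3`, and with `u, v, w` the edges at `p₀` the sum
becomes `(u ⊗ (v × w) + v ⊗ (w × u) + w ⊗ (u × v)) / 6`, which is `⟨u, v × w⟩ / 6 • I`:
the rows `v × w, w × u, u × v` form the adjugate of the matrix with columns `u, v, w`.
-/

open scoped BigOperators Matrix

noncomputable section

/-- Outer product `u ⊗ w` of two vectors of `ℝ³`. -/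
def outer3 (u w : Fin 3 → ℝ) : Matrix (Fin 3) (Fin 3) ℝ := fun i j => u i * w j

lemma outer3_eq_vecMulVec (u w : Fin 3 → ℝ) : outer3 u w = Matrix.vecMulVec u w := rfl

section

open Matrix

variable {R : Type*} [CommRing R]

lemma Matrix.vecMulVec_sum {m n ι : Type*} (u : m → R) (s : Finset ι) (v : ι → n → R) :
    vecMulVec u (∑ i ∈ s, v i) = ∑ i ∈ s, vecMulVec u (v i) := by
  ext a b
  simp only [vecMulVec_apply, Finset.sum_apply, Matrix.sum_apply, Finset.mul_sum]

lemma Matrix.sum_vecMulVec_eq_sum_sub_of_sum_eq_zero {m k : Type*} {n : ℕ}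
    (b : Fin (n + 1) → m → R) (S : Fin (n + 1) → k → R) (hS : ∑ i, S i = 0) :
    ∑ i, vecMulVec (b i) (S i) = ∑ i : Fin n, vecMulVec (b i.succ - b 0) (S i.succ) := by
  have hS₀ : S 0 = -∑ i : Fin n, S i.succ := by
    rw [Fin.sum_univ_succ] at hS
    exact eq_neg_of_add_eq_zero_left hS
  simp only [Fin.sum_univ_succ (f := fun i => vecMulVec (b i) (S i)), hS₀, vecMulVec_neg,
    vecMulVec_sum, sub_vecMulVec, Finset.sum_sub_distrib]
  abel

lemma cross_sub_sub (u v w : Fin 3 → R) :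
    (v - u) ⨯₃ (w - u) = v ⨯₃ w + w ⨯₃ u + u ⨯₃ v := by
  simp only [map_sub, LinearMap.sub_apply, cross_self, ← cross_anticomm u w, ← cross_anticomm v u]
  abel

lemma vecMulVec_cross_cyclic_sum (u v w : Fin 3 → R) :
    vecMulVec u (v ⨯₃ w) + vecMulVec v (w ⨯₃ u) + vecMulVec w (u ⨯₃ v) =
      (u ⬝ᵥ v ⨯₃ w) • (1 : Matrix (Fin 3) (Fin 3) R) := by
  ext i j
  fin_cases i <;> fin_cases j <;>
    simp [cross_apply, dotProduct, Fin.sum_univ_three] <;> ring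

end

theorem tetrahedron_gradient_reconstruction_consistency (p₀ p₁ p₂ p₃ : Fin 3 → ℝ)
    (S : Fin 4 → Fin 3 → ℝ)
    (hS0 : S 0 = (1 / 2 : ℝ) • ((p₂ - p₁) ⨯₃ (p₃ - p₁)))
    (hS1 : S 1 = (1 / 2 : ℝ) • ((p₃ - p₀) ⨯₃ (p₂ - p₀)))
    (hS2 : S 2 = (1 / 2 : ℝ) • ((p₁ - p₀) ⨯₃ (p₃ - p₀)))
    (hS3 : S 3 = (1 / 2 : ℝ) • ((p₂ - p₀) ⨯₃ (p₁ - p₀)))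
    (b : Fin 4 → Fin 3 → ℝ)
    (hb0 : b 0 = (1 / 3 : ℝ) • (p₁ + p₂ + p₃))
    (hb1 : b 1 = (1 / 3 : ℝ) • (p₀ + p₂ + p₃))
    (hb2 : b 2 = (1 / 3 : ℝ) • (p₀ + p₁ + p₃))
    (hb3 : b 3 = (1 / 3 : ℝ) • (p₀ + p₁ + p₂))
    (V : ℝ) (hV : V = (1 / 6 : ℝ) * ((p₁ - p₀) ⬝ᵥ ((p₂ - p₀) ⨯₃ (p₃ - p₀)))) :
    (∑ i, outer3 (b i) (S i)) = V • (1 : Matrix (Fin 3) (Fin 3) ℝ) := by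
  obtain ⟨u, rfl⟩ : ∃ u, p₁ = p₀ + u := ⟨p₁ - p₀, by abel⟩
  obtain ⟨v, rfl⟩ : ∃ v, p₂ = p₀ + v := ⟨p₂ - p₀, by abel⟩
  obtain ⟨w, rfl⟩ : ∃ w, p₃ = p₀ + w := ⟨p₃ - p₀, by abel⟩
  simp only [add_sub_cancel_left, add_sub_add_left_eq_sub] at hS0 hS1 hS2 hS3 hV
  have hS0' : S 0 = (1 / 2 : ℝ) • (v ⨯₃ w + w ⨯₃ u + u ⨯₃ v) := by rw [hS0, cross_sub_sub]
  have hS1' : S 1 = (-1 / 2 : ℝ) • v ⨯₃ w := by rw [hS1, ← cross_anticomm]; module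
  have hS2' : S 2 = (-1 / 2 : ℝ) • w ⨯₃ u := by rw [hS2, ← cross_anticomm]; module
  have hS3' : S 3 = (-1 / 2 : ℝ) • u ⨯₃ v := by rw [hS3, ← cross_anticomm]; module
  have hclosed : ∑ i, S i = 0 := by
    rw [Fin.sum_univ_four, hS0', hS1', hS2', hS3']
    module
  have hb1' : b 1 - b 0 = (-1 / 3 : ℝ) • u := by rw [hb1, hb0]; module
  have hb2' : b 2 - b 0 = (-1 / 3 : ℝ) • v := by rw [hb2, hb0]; module
  have hb3' : b 3 - b 0 = (-1 / 3 : ℝ) • w := by rw [hb3, hb0]; module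
  simp only [outer3_eq_vecMulVec]
  rw [Matrix.sum_vecMulVec_eq_sum_sub_of_sum_eq_zero b S hclosed, Fin.sum_univ_three]
  simp only [Fin.succ_zero_eq_one, Fin.succ_one_eq_two, show (Fin.succ 2 : Fin 4) = 3 from rfl,
    hb1', hb2', hb3', hS1', hS2', hS3', Matrix.smul_vecMulVec, Matrix.vecMulVec_smul]
  rw [hV, mul_smul, ← vecMulVec_cross_cyclic_sum]
  module
end
end
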